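/- Let g be a centerless Lie 2-algebra with MT(g) = 3, standard maximal torus t with toral basis {t1, t2, t3} and dual basis {α, β, γ} of t*, whose t-root set is Δ = {α, β, γ, α+β, α+γ, β+γ, α+β+γ}. Assume dim(g_α) = dim(g_β) = dim(g_γ) and dim(g_γ) > dim(g_ξ) for every ξ ∈ {α+β, α+γ, β+γ, α+β+γ}. Then I := span{t1 + t2, t1 + t3} ⊕ n ⊕ ⊕_{ξ∈Δ} g_ξ is an ideal of g. -/

import Mathlib

/-- A 2-map on a Lie algebra over the field `F` (char 2 version of a restricted structure):
`(c • x)^[2] = c^2 • x^[2]`, `ad (x^[2]) = (ad x) ∘ (ad x)` and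
`(x+y)^[2] = x^[2] + y^[2] + [x,y]`. -/
structure IsTwoMap (F : Type*) [Field F] {g : Type*} [LieRing g] [LieAlgebra F g]
    (p : g → g) : Prop where
  smul_pow : ∀ (c : F) (x : g), p (c • x) = (c ^ 2) • p x
  ad_pow : ∀ x y : g, ⁅p x, y⁆ = ⁅x, ⁅x, y⁆⁆
  add_pow : ∀ x y : g, p (x + y) = p x + p y + ⁅x, y⁆

/-- An element is 2-nilpotent if some iterate of the 2-map annihilates it. -/
def IsTwoNilpotent {g : Type*} [Zero g] (p : g → g) (x : g) : Prop :=
  ∃ k : ℕ, p^[k] x = 0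

/-- A torus of a Lie 2-algebra: a Lie subalgebra closed under the 2-map on which the
2-map is invertible (bijective). -/
def IsTorus (F : Type*) [Field F] {g : Type*} [LieRing g] [LieAlgebra F g]
    (p : g → g) (t : LieSubalgebra F g) : Prop :=
  (∀ x ∈ t, p x ∈ t) ∧ Set.BijOn p (t : Set g) (t : Set g)

/-- A maximal torus of a Lie 2-algebra. -/
def IsMaxTorus (F : Type*) [Field F] {g : Type*} [LieRing g] [LieAlgebra F g]
    (p : g → g) (t : LieSubalgebra F g) : Prop :=
  IsTorus F p t ∧ ∀ s : LieSubalgebra F g, IsTorus F p s → t ≤ s → s = t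

/-- The weight (root) space of a linear functional `lam` on a torus `t`:
`g_lam = {v | [x, v] = lam x • v for all x ∈ t}`. -/
def rootSpace {F : Type*} [Field F] {g : Type*} [LieRing g] [LieAlgebra F g]
    (t : LieSubalgebra F g) (lam : Module.Dual F t) : Submodule F g where
  carrier := {v | ∀ x : t, ⁅(x : g), v⁆ = lam x • v}
  add_mem' := by
    intro a b ha hb x
    rw [lie_add, ha x, hb x, smul_add]
  zero_mem' := by
    intro x
    rw [lie_zero, smul_zero]
  smul_mem' := by
    intro c v hv x
    rw [lie_smul, hv x, smul_comm]

/-- The set of `t`-roots: nonzero functionals with nonzero root space. -/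
def rootSet {F : Type*} [Field F] {g : Type*} [LieRing g] [LieAlgebra F g]
    (t : LieSubalgebra F g) : Set (Module.Dual F t) :=
  {lam | lam ≠ 0 ∧ rootSpace t lam ≠ ⊥}

/-- The subspace `N(σ, δ) = {x ∈ g_σ : [x, g_σ] ⊆ n and [[x, g_δ], g_{σ+δ}] ⊆ n}`,
given as `Nspace n g_σ g_δ g_{σ+δ}`. -/
def Nspace {F : Type*} [Field F] {g : Type*} [LieRing g] [LieAlgebra F g]
    (n gs gd gsd : Submodule F g) : Submodule F g where
  carrier := {x | x ∈ gs ∧ (∀ y ∈ gs, ⁅x, y⁆ ∈ n) ∧ ∀ z ∈ gd, ∀ w ∈ gsd, ⁅⁅x, z⁆, w⁆ ∈ n}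
  add_mem' := by
    intro a b ha hb
    obtain ⟨ha1, ha2, ha3⟩ := ha
    obtain ⟨hb1, hb2, hb3⟩ := hb
    refine ⟨gs.add_mem ha1 hb1, fun y hy => ?_, fun z hz w hw => ?_⟩
    · rw [add_lie]
      exact n.add_mem (ha2 y hy) (hb2 y hy)
    · rw [add_lie, add_lie]
      exact n.add_mem (ha3 z hz w hw) (hb3 z hz w hw)
  zero_mem' := by
    refine ⟨gs.zero_mem, fun y hy => ?_, fun z hz w hw => ?_⟩
    · rw [zero_lie]; exact n.zero_mem
    · rw [zero_lie, zero_lie]; exact n.zero_mem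
  smul_mem' := by
    intro c x hx
    obtain ⟨h1, h2, h3⟩ := hx
    refine ⟨gs.smul_mem c h1, fun y hy => ?_, fun z hz w hw => ?_⟩
    · rw [smul_lie]; exact n.smul_mem c (h2 y hy)
    · rw [smul_lie, smul_lie]; exact n.smul_mem c (h3 z hz w hw)

/-!
The adjoint actions of the toral elements `t₁, t₂, t₃` are commuting idempotents, so `g` is the
sum of its root spaces, and `⁅g_λ, g_μ⁆ ⊆ g_{λ+μ}`. The only bracket not obviously in the ideal is
`⁅x, y⁆ = s + m` with `x, y ∈ g_ξ`, `s ∈ t`, `m ∈ n`; there one needs `α s + β s + γ s = 0`, i.e.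
`s ∈ span {t₁ + t₂, t₁ + t₃}`. Root by root, this follows from `ξ s = 0` (an Engel argument) and
from `δ s = 0` whenever `dim g_{δ+ξ} < dim g_δ` (a rank argument for `(ad z)² = ad z^[2]`).
-/

open Module

section CharTwo

variable {M : Type*} [AddCommGroup M]

lemma add_self_eq_zero_of_charP_two (F : Type*) [Ring F] [CharP F 2] [Module F M] (v : M) :
    v + v = 0 := by
  rw [← two_smul F v, CharTwo.two_eq_zero, zero_smul]

lemma neg_eq_self_of_charP_two (F : Type*) [Ring F] [CharP F 2] [Module F M] (v : M) : -v = v :=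
  neg_eq_of_add_eq_zero_left (add_self_eq_zero_of_charP_two F v)

end CharTwo

open Polynomial in
lemma IsAlgClosed.exists_mul_sq_add_add_eq_zero {K : Type*} [Field K] [IsAlgClosed K] (a b : K) :
    ∃ c : K, a * c ^ 2 + c + b = 0 := by
  rcases eq_or_ne a 0 with rfl | ha
  · exact ⟨-b, by ring⟩
  obtain ⟨c, hc⟩ := IsAlgClosed.exists_root (C a * X ^ 2 + C 1 * X + C b)
    (by rw [degree_quadratic ha]; exact two_ne_zero)
  exact ⟨c, by simpa using hc⟩

open Polynomial in
lemma Module.End.isSemisimple_of_isIdempotentElem {K M : Type*} [Field K] [AddCommGroup M]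
    [Module K M] {f : End K M} (hf : IsIdempotentElem f) : f.IsSemisimple := by
  refine isSemisimple_of_squarefree_aeval_eq_zero (p := X * (X - C 1)) ?_ ?_
  · refine (separable_X.mul separable_X_sub_C ?_).squarefree
    simpa using isCoprime_X_sub_C_of_isUnit_sub (R := K) (a := 0) (b := 1) (by simp)
  · simp [mul_sub, hf.eq]

lemma Module.End.iSup_iInf_eigenspace_eq_top_of_commute {K M ι : Type*} [Field K] [IsAlgClosed K]
    [AddCommGroup M] [Module K M] [FiniteDimensional K M] (f : ι → End K M)
    (hcomm : Pairwise fun i j ↦ Commute (f i) (f j)) (hss : ∀ i, (f i).IsSemisimple) :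
    ⨆ χ : ι → K, ⨅ i, (f i).eigenspace (χ i) = ⊤ := by
  have hmax : ∀ i μ, (f i).maxGenEigenspace μ = (f i).eigenspace μ := fun i ↦
    (hss i).isFinitelySemisimple.maxGenEigenspace_eq_eigenspace
  simpa only [hmax] using
    iSup_iInf_maxGenEigenspace_eq_top_of_iSup_maxGenEigenspace_eq_top_of_commute f hcomm
      fun i ↦ iSup_maxGenEigenspace_eq_top (f i)

lemma Submodule.exists_dual_extend_of_disjoint {K V : Type*} [Field K] [AddCommGroup V]
    [Module K V] {P Q : Submodule K V} (hPQ : Disjoint P Q) (f : Dual K P) :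
    ∃ φ : Dual K V, (∀ x : P, φ x = f x) ∧ ∀ y ∈ Q, φ y = 0 := by
  have hker : LinearMap.ker (P.subtype.coprod Q.subtype) = ⊥ := by
    rw [LinearMap.ker_coprod_of_disjoint_range _ _ (by simpa using hPQ)]
    simp
  obtain ⟨ψ, hψ⟩ := LinearMap.exists_leftInverse_of_injective _ hker
  refine ⟨f ∘ₗ LinearMap.fst K P Q ∘ₗ ψ, fun x ↦ ?_, fun y hy ↦ ?_⟩
  · simpa using congrArg (f ∘ Prod.fst) (LinearMap.congr_fun hψ (x, 0))
  · simpa using congrArg (f ∘ Prod.fst) (LinearMap.congr_fun hψ (0, ⟨y, hy⟩))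

lemma LieSubmodule.eq_bot_of_le_lie_top {R L M : Type*} [CommRing R] [LieRing L]
    [LieAlgebra R L] [AddCommGroup M] [Module R M] [LieRingModule L M] [LieModule R L M]
    [LieModule.IsNilpotent L M] (N : LieSubmodule R L M) (h : N ≤ ⁅(⊤ : LieIdeal R L), N⁆) :
    N = ⊥ := by
  obtain ⟨k, hk⟩ := LieModule.IsNilpotent.nilpotent R L M
  have hle : ∀ j, N ≤ LieModule.lowerCentralSeries R L M j := by
    intro j
    induction j with
    | zero => exact le_top
    | succ j ih =>
      rw [LieModule.lowerCentralSeries_succ]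
      exact h.trans (LieSubmodule.mono_lie_right _ ih)
  exact _root_.eq_bot_iff.mpr (hk ▸ hle k)

section RootSpace

variable {F : Type*} [Field F] {g : Type*} [LieRing g] [LieAlgebra F g] {t : LieSubalgebra F g}

lemma lie_mem_rootSpace_add {ξ η : Dual F t} {x y : g} (hx : x ∈ rootSpace t ξ)
    (hy : y ∈ rootSpace t η) : ⁅x, y⁆ ∈ rootSpace t (ξ + η) := fun s ↦ by
  rw [leibniz_lie, hx s, hy s, lie_smul, smul_lie, LinearMap.add_apply, add_smul]

lemma lie_mem_rootSpace_of_mem_rootSpace_zero {ξ : Dual F t} {x y : g}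
    (hx : x ∈ rootSpace t 0) (hy : y ∈ rootSpace t ξ) : ⁅x, y⁆ ∈ rootSpace t ξ := by
  simpa using lie_mem_rootSpace_add hx hy

lemma lie_mem_rootSpace_zero_of_charP_two [CharP F 2] {ξ : Dual F t} {x y : g}
    (hx : x ∈ rootSpace t ξ) (hy : y ∈ rootSpace t ξ) : ⁅x, y⁆ ∈ rootSpace t 0 := by
  simpa [add_self_eq_zero_of_charP_two F ξ] using lie_mem_rootSpace_add hx hy

lemma rootSpace_le_iSup_rootSet {ξ : Dual F t} (hξ : ξ ≠ 0) :
    rootSpace t ξ ≤ ⨆ η ∈ rootSet t, rootSpace t η := by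
  by_cases hbot : rootSpace t ξ = ⊥
  · simp [hbot]
  · exact le_iSup₂_of_le ξ ⟨hξ, hbot⟩ le_rfl

lemma exists_eq_add_of_mem_rootSpace_zero {n : Submodule F g}
    (hdecomp : rootSpace t 0 = t.toSubmodule ⊔ n) {u : g} (hu : u ∈ rootSpace t 0) :
    ∃ s : t, ∃ m ∈ n, u = s + m := by
  rw [hdecomp] at hu
  obtain ⟨s, hs, m, hm, rfl⟩ := Submodule.mem_sup.mp hu
  exact ⟨⟨s, hs⟩, m, hm, rfl⟩

lemma exists_mem_rootSpace_of_lie_mem_span_singleton {S : Set t} (hS : Submodule.span F S = ⊤)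
    {v : g} (hv : ∀ s ∈ S, ⁅(s : g), v⁆ ∈ F ∙ v) : ∃ ξ : Dual F t, v ∈ rootSpace t ξ := by
  rcases eq_or_ne v 0 with rfl | hv0
  · exact ⟨0, Submodule.zero_mem _⟩
  let ρ : t →ₗ[F] g :=
    LinearMap.flip (LieAlgebra.ad F g : g →ₗ[F] Module.End F g) v ∘ₗ t.toSubmodule.subtype
  have hρ : ∀ u, ρ u ∈ F ∙ v := by
    have : Submodule.span F S ≤ (F ∙ v).comap ρ := Submodule.span_le.mpr fun s hs ↦ hv s hs
    exact fun u ↦ this (hS ▸ Submodule.mem_top)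
  let e := LinearEquiv.toSpanNonzeroSingleton F g v hv0
  refine ⟨e.symm.toLinearMap ∘ₗ ρ.codRestrict _ hρ, fun u ↦ ?_⟩
  show ⁅(u : g), v⁆ = e.symm ⟨ρ u, hρ u⟩ • v
  rw [LinearEquiv.toSpanNonzeroSingleton_symm_apply_smul]
  rfl

end RootSpace

namespace IsTwoMap

variable {F : Type*} [Field F] {g : Type*} [LieRing g] [LieAlgebra F g] {p : g → g}

lemma ad_map (hp : IsTwoMap F p) (x : g) :
    LieAlgebra.ad F g (p x) = LieAlgebra.ad F g x ^ 2 := by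
  ext y
  simp [pow_two, hp.ad_pow]

lemma isNilpotent_ad (hp : IsTwoMap F p) {x : g} (hx : IsTwoNilpotent p x) :
    IsNilpotent (LieAlgebra.ad F g x) := by
  obtain ⟨k, hk⟩ := hx
  induction k generalizing x with
  | zero => exact ⟨1, by simp_all⟩
  | succ k ih =>
    have := ih (Function.iterate_succ_apply p k x ▸ hk)
    rw [hp.ad_map] at this
    exact this.of_pow

lemma isIdempotentElem_ad (hp : IsTwoMap F p) {x : g} (hx : p x = x) :
    IsIdempotentElem (LieAlgebra.ad F g x) := by
  rw [IsIdempotentElem, ← pow_two, ← hp.ad_map, hx]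

lemma map_add_smul (hp : IsTwoMap F p) (x y : g) (c : F) :
    p (x + c • y) = p x + c ^ 2 • p y + c • ⁅x, y⁆ := by
  rw [hp.add_pow, hp.smul_pow, lie_smul]

lemma map_mem_rootSpace_zero (hp : IsTwoMap F p) {t : LieSubalgebra F g} {ξ : Dual F t} {x : g}
    (hx : x ∈ rootSpace t ξ) : p x ∈ rootSpace t 0 := fun s ↦ by
  rw [LinearMap.zero_apply, zero_smul, ← lie_skew, hp.ad_pow, ← lie_skew x (s : g), hx s]
  simp

end IsTwoMap

section Decomposition

variable {F : Type*} [Field F] {g : Type*} [LieRing g] [LieAlgebra F g]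

theorem iSup_rootSpace_eq_top [IsAlgClosed F] [FiniteDimensional F g] {p : g → g}
    (hp : IsTwoMap F p) {t : LieSubalgebra F g} (ht : t.toSubmodule ≤ rootSpace t 0) {S : Set t}
    (hS : Submodule.span F S = ⊤) (hS_toral : ∀ s ∈ S, p s = s) :
    ⨆ ξ : Dual F t, rootSpace t ξ = ⊤ := by
  let f : S → End F g := fun s ↦ LieAlgebra.ad F g ((s : t) : g)
  have hcomm : Pairwise fun i j ↦ Commute (f i) (f j) := fun i j _ ↦ by
    have hij : ⁅((i : t) : g), ((j : t) : g)⁆ = 0 := by simpa using ht (j : t).2 i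
    refine LinearMap.ext fun v ↦ ?_
    simp only [f, Module.End.mul_apply, LieAlgebra.ad_apply]
    rw [leibniz_lie, hij, zero_lie, zero_add]
  have hss : ∀ i, (f i).IsSemisimple := fun i ↦
    Module.End.isSemisimple_of_isIdempotentElem (hp.isIdempotentElem_ad (hS_toral _ i.2))
  rw [eq_top_iff, ← Module.End.iSup_iInf_eigenspace_eq_top_of_commute f hcomm hss]
  refine iSup_le fun χ v hv ↦ ?_
  obtain ⟨ξ, hξ⟩ := exists_mem_rootSpace_of_lie_mem_span_singleton hS fun s hs ↦ by
    have hs := Module.End.mem_eigenspace_iff.mp ((Submodule.mem_iInf _).mp hv ⟨s, hs⟩)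
    exact hs ▸ Submodule.smul_mem _ _ (Submodule.mem_span_singleton_self v)
  exact Submodule.mem_iSup_of_mem ξ hξ

end Decomposition

section Ideal

variable {F : Type*} [Field F] [CharP F 2] {g : Type*} [LieRing g] [LieAlgebra F g]

theorem lie_mem_sup_iSup_rootSpace {t : LieSubalgebra F g} {S n : Submodule F g}
    (hS : S ≤ t.toSubmodule) (hn : n ≤ rootSpace t 0)
    (hstd : ∀ x ∈ rootSpace t 0, ∀ y ∈ n, ⁅x, y⁆ ∈ n)
    (htop : ⨆ ξ : Dual F t, rootSpace t ξ = ⊤)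
    (hself : ∀ ξ ∈ rootSet t, ∀ x ∈ rootSpace t ξ, ∀ y ∈ rootSpace t ξ, ⁅x, y⁆ ∈ S ⊔ n)
    (x y : g) (hy : y ∈ S ⊔ n ⊔ ⨆ ξ ∈ rootSet t, rootSpace t ξ) :
    ⁅x, y⁆ ∈ S ⊔ n ⊔ ⨆ ξ ∈ rootSet t, rootSpace t ξ := by
  set I := S ⊔ n ⊔ ⨆ ξ ∈ rootSet t, rootSpace t ξ
  have hroot : ∀ ξ ≠ 0, rootSpace t ξ ≤ I := fun ξ hξ ↦
    (rootSpace_le_iSup_rootSet hξ).trans le_sup_right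
  have hSn : S ⊔ n ≤ I := le_sup_left
  have hmem : ∀ μ, ∀ x ∈ rootSpace t μ, I ≤ I.comap (LieAlgebra.ad F g x) := by
    intro μ x hx
    refine sup_le (sup_le (fun y hy ↦ ?_) (fun y hy ↦ ?_)) (iSup₂_le fun ξ hξ y hy ↦ ?_) <;>
      change ⁅x, y⁆ ∈ I
    · have hxy : ⁅x, y⁆ = -(μ ⟨y, hS hy⟩ • x) := by rw [← lie_skew, hx ⟨y, hS hy⟩]
      rcases eq_or_ne μ 0 with rfl | hμ
      · simp [hxy]
      · exact hroot μ hμ (hxy ▸ neg_mem (Submodule.smul_mem _ _ hx))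
    · rcases eq_or_ne μ 0 with rfl | hμ
      · exact hSn (Submodule.mem_sup_right (hstd x hx y hy))
      · exact hroot μ hμ (by simpa using lie_mem_rootSpace_add hx (hn hy))
    · rcases eq_or_ne (μ + ξ) 0 with h | h
      · obtain rfl : μ = ξ := by
          rw [← neg_eq_self_of_charP_two F ξ]
          exact eq_neg_of_add_eq_zero_left h
        exact hSn (hself μ hξ x hx y hy)
      · exact hroot _ h (lie_mem_rootSpace_add hx hy)
  refine Submodule.iSup_induction (fun μ ↦ rootSpace t μ) (motive := fun x ↦ ⁅x, y⁆ ∈ I)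
    (htop ▸ Submodule.mem_top) (fun μ x hx ↦ hmem μ x hx hy) (by simp) fun a b ha hb ↦ ?_
  rw [add_lie]
  exact add_mem ha hb

end Ideal

namespace IsTwoMap

variable {F : Type*} [Field F] {g : Type*} [LieRing g] [LieAlgebra F g] {p : g → g}
  {t : LieSubalgebra F g} {n : Submodule F g}

/-- On `g_δ`, `(ad z)² = ad (p z)` is `δ s` plus a nilpotent map, so it is injective and factors
through `g_{δ+ξ}` (in characteristic `2`, `ξ + ξ = 0`). -/
lemma apply_eq_zero_of_finrank_lt [CharP F 2] [FiniteDimensional F g] (hp : IsTwoMap F p)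
    {ξ δ : Dual F t} (hdim : finrank F (rootSpace t (δ + ξ)) < finrank F (rootSpace t δ))
    {z : g} (hz : z ∈ rootSpace t ξ) {s : t} {m : g} (hm : m ∈ rootSpace t 0)
    (hm_nil : IsTwoNilpotent p m) (hpz : p z = s + m) : δ s = 0 := by
  by_contra hs
  have hδξ : ξ + (δ + ξ) = δ := by
    rw [add_left_comm, add_self_eq_zero_of_charP_two F ξ, add_zero]
  let L₁ : rootSpace t δ →ₗ[F] rootSpace t (δ + ξ) := (LieAlgebra.ad F g z).restrict
    fun v hv ↦ add_comm ξ δ ▸ lie_mem_rootSpace_add hz hv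
  let L₂ : rootSpace t (δ + ξ) →ₗ[F] rootSpace t δ := (LieAlgebra.ad F g z).restrict
    fun v hv ↦ hδξ ▸ lie_mem_rootSpace_add hz hv
  let N : End F (rootSpace t δ) := (LieAlgebra.ad F g m).restrict
    fun v hv ↦ lie_mem_rootSpace_of_mem_rootSpace_zero hm hv
  have hL : L₂ ∘ₗ L₁ = algebraMap F (End F (rootSpace t δ)) (δ s) + N := by
    ext v
    simp only [L₁, L₂, LinearMap.coe_comp, Function.comp_apply, LinearMap.coe_restrict_apply,
      LieAlgebra.ad_apply, ← hp.ad_pow, hpz, add_lie, v.2 s, LinearMap.add_apply,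
      algebraMap_end_apply, Submodule.coe_add, SetLike.val_smul, add_right_inj]
    rfl
  have hunit : IsUnit (L₂ ∘ₗ L₁) := hL ▸
    (Module.End.isNilpotent.restrict _ (hp.isNilpotent_ad hm_nil)).isUnit_add_left_of_commute
      ((IsUnit.mk0 _ hs).map _) (Algebra.commute_algebraMap_right _ _)
  have hinj : Function.Injective L₁ :=
    Function.Injective.of_comp (f := L₂) ((Module.End.isUnit_iff _).mp hunit).injective
  exact hdim.not_ge (LinearMap.finrank_le_finrank_of_injective hinj)

lemma apply_lie_eq_zero (hp : IsTwoMap F p) (φ : Dual F g) {V : Submodule F g}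
    (hV : ∀ z ∈ V, φ (p z) = 0) {x y : g} (hx : x ∈ V) (hy : y ∈ V) : φ ⁅x, y⁆ = 0 := by
  simpa [hp.add_pow, hV x hx, hV y hy] using hV _ (V.add_mem hx hy)

/-- Over an algebraically closed field of characteristic `2`, the quadratic map `φ ∘ p`, whose
polar form is `φ ⁅·, ·⁆`, has a hyperbolic pair in `span {x, y}`. -/
lemma exists_apply_map_eq_zero_of_apply_lie_eq_one [IsAlgClosed F] [CharP F 2]
    (hp : IsTwoMap F p) (φ : Dual F g) {V : Submodule F g} {x y : g} (hx : x ∈ V) (hy : y ∈ V)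
    (hxy : φ ⁅x, y⁆ = 1) :
    ∃ x' ∈ V, ∃ y' ∈ V, φ (p x') = 0 ∧ φ (p y') = 0 ∧ φ ⁅x', y'⁆ = 1 := by
  obtain ⟨c, hc⟩ := IsAlgClosed.exists_mul_sq_add_add_eq_zero (φ (p x)) (φ (p y))
  have hyx : φ ⁅y, x⁆ = 1 := by rw [← lie_skew, map_neg, hxy, CharTwo.neg_eq]
  set y' := y + c • x
  have hy' : y' ∈ V := V.add_mem hy (V.smul_mem c hx)
  have hxy' : φ ⁅x, y'⁆ = 1 := by simp [y', hxy]
  have hpy' : φ (p y') = 0 := by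
    rw [hp.map_add_smul]
    simp only [map_add, map_smul, smul_eq_mul, hyx]
    linear_combination hc
  refine ⟨x + φ (p x) • y', V.add_mem hx (V.smul_mem _ hy'), y', hy', ?_, hpy', ?_⟩
  · rw [hp.map_add_smul]
    simp [hpy', hxy', CharTwo.add_self_eq_zero]
  · simp [hxy']

lemma smul_eq_lie_add_lie [CharP F 2] (hp : IsTwoMap F p) {ξ : Dual F t} {x y : g}
    (hx : x ∈ rootSpace t ξ) (hy : y ∈ rootSpace t ξ) {s sx : t} {m mx : g} (hxy : ⁅x, y⁆ = s + m)
    (hpx : p x = sx + mx) (hsx : ξ sx = 0) : ξ s • x = ⁅mx, y⁆ + ⁅m, x⁆ := by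
  have h := hp.ad_pow x y
  rw [hpx, add_lie, hy sx, hsx, zero_smul, zero_add, hxy, lie_add, ← lie_skew x (s : g),
    ← lie_skew x m, neg_eq_self_of_charP_two F, neg_eq_self_of_charP_two F, hx s] at h
  rw [h, add_assoc, add_self_eq_zero_of_charP_two F, add_zero]

lemma apply_coe_add_eq {ξ : Dual F t} {φ : Dual F g} (hφt : ∀ s : t, φ s = ξ s)
    (hφn : ∀ m ∈ n, φ m = 0) (s : t) {m : g} (hm : m ∈ n) : φ (s + m) = ξ s := by
  rw [map_add, hφt, hφn m hm, add_zero]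

/-- If `φ ⁅x, y⁆ ≠ 0`, the identities `ξ s • x = ⁅mx, y⁆ + ⁅m, x⁆` and its analogue for `y` put
`x` and `y` in `⁅n, N⁆` for the `n`-module `N` they generate; by Engel's theorem `n` acts
nilpotently on `g`, so `N = 0`. -/
lemma apply_lie_eq_zero_of_apply_map_eq_zero [CharP F 2] [FiniteDimensional F g]
    (hp : IsTwoMap F p) (hn : ∀ x : g, x ∈ n ↔ x ∈ rootSpace t 0 ∧ IsTwoNilpotent p x)
    (hstd : ∀ x ∈ rootSpace t 0, ∀ y ∈ n, ⁅x, y⁆ ∈ n) (hdecomp : rootSpace t 0 = t.toSubmodule ⊔ n)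
    {ξ : Dual F t} {φ : Dual F g} (hφt : ∀ s : t, φ s = ξ s) (hφn : ∀ m ∈ n, φ m = 0)
    {x y : g} (hx : x ∈ rootSpace t ξ) (hy : y ∈ rootSpace t ξ) (hpx : φ (p x) = 0)
    (hpy : φ (p y) = 0) : φ ⁅x, y⁆ = 0 := by
  obtain ⟨s, m, hm, hxy⟩ :=
    exists_eq_add_of_mem_rootSpace_zero hdecomp (lie_mem_rootSpace_zero_of_charP_two hx hy)
  obtain ⟨sx, mx, hmx, hpx'⟩ :=
    exists_eq_add_of_mem_rootSpace_zero hdecomp (hp.map_mem_rootSpace_zero hx)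
  obtain ⟨sy, my, hmy, hpy'⟩ :=
    exists_eq_add_of_mem_rootSpace_zero hdecomp (hp.map_mem_rootSpace_zero hy)
  have hyx : ⁅y, x⁆ = s + m := by rw [← lie_skew, hxy, neg_eq_self_of_charP_two F]
  rw [hpx', apply_coe_add_eq hφt hφn sx hmx] at hpx
  rw [hpy', apply_coe_add_eq hφt hφn sy hmy] at hpy
  rw [hxy, apply_coe_add_eq hφt hφn s hm]
  by_contra hs
  let L : LieSubalgebra F g := { n with lie_mem' := fun ha hb ↦ hstd _ ((hn _).1 ha).1 _ hb }
  have : LieModule.IsNilpotent L g := LieModule.isNilpotent_iff_forall'.mpr fun z ↦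
    hp.isNilpotent_ad ((hn z).1 z.2).2
  let N := LieSubmodule.lieSpan F L {x, y}
  have hxN : x ∈ N := LieSubmodule.subset_lieSpan (by simp)
  have hyN : y ∈ N := LieSubmodule.subset_lieSpan (by simp)
  have hN : N ≤ ⁅(⊤ : LieIdeal F L), N⁆ := by
    have hmem : ∀ a ∈ n, ∀ b ∈ N, ⁅a, b⁆ ∈ ⁅(⊤ : LieIdeal F L), N⁆ := fun a ha b hb ↦
      LieSubmodule.lie_mem_lie (x := (⟨a, ha⟩ : L)) (LieSubmodule.mem_top _) hb
    rw [LieSubmodule.lieSpan_le]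
    refine Set.insert_subset_iff.mpr ⟨?_, Set.singleton_subset_iff.mpr ?_⟩ <;>
      rw [SetLike.mem_coe, ← LieSubmodule.mem_toSubmodule, ← Submodule.smul_mem_iff _ hs]
    · rw [hp.smul_eq_lie_add_lie hx hy hxy hpx' hpx]
      exact add_mem (hmem _ hmx _ hyN) (hmem _ hm _ hxN)
    · rw [hp.smul_eq_lie_add_lie hy hx hyx hpy' hpy]
      exact add_mem (hmem _ hmy _ hxN) (hmem _ hm _ hyN)
  rw [N.eq_bot_of_le_lie_top hN, LieSubmodule.mem_bot] at hxN
  apply hs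
  rw [← apply_coe_add_eq hφt hφn s hm, ← hxy, hxN, zero_lie, map_zero]

lemma apply_lie_eq_zero_of_mem_rootSpace [IsAlgClosed F] [CharP F 2] [FiniteDimensional F g]
    (hp : IsTwoMap F p) (hn : ∀ x : g, x ∈ n ↔ x ∈ rootSpace t 0 ∧ IsTwoNilpotent p x)
    (hstd : ∀ x ∈ rootSpace t 0, ∀ y ∈ n, ⁅x, y⁆ ∈ n) (hdecomp : rootSpace t 0 = t.toSubmodule ⊔ n)
    {ξ : Dual F t} {φ : Dual F g} (hφt : ∀ s : t, φ s = ξ s) (hφn : ∀ m ∈ n, φ m = 0)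
    {x y : g} (hx : x ∈ rootSpace t ξ) (hy : y ∈ rootSpace t ξ) : φ ⁅x, y⁆ = 0 := by
  by_contra h
  obtain ⟨x', hx', y', hy', hpx', hpy', hx'y'⟩ := hp.exists_apply_map_eq_zero_of_apply_lie_eq_one φ
    ((rootSpace t ξ).smul_mem (φ ⁅x, y⁆)⁻¹ hx) hy (by rw [smul_lie, map_smul, smul_eq_mul,
      inv_mul_cancel₀ h])
  exact one_ne_zero (hx'y' ▸
    hp.apply_lie_eq_zero_of_apply_map_eq_zero hn hstd hdecomp hφt hφn hx' hy' hpx' hpy')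

lemma apply_eq_zero_of_lie_eq [IsAlgClosed F] [CharP F 2] [FiniteDimensional F g]
    (hp : IsTwoMap F p) (hn : ∀ x : g, x ∈ n ↔ x ∈ rootSpace t 0 ∧ IsTwoNilpotent p x)
    (hstd : ∀ x ∈ rootSpace t 0, ∀ y ∈ n, ⁅x, y⁆ ∈ n) (hdecomp : rootSpace t 0 = t.toSubmodule ⊔ n)
    (hdisj : Disjoint t.toSubmodule n) {ξ : Dual F t} {x y : g} (hx : x ∈ rootSpace t ξ)
    (hy : y ∈ rootSpace t ξ) {s : t} {m : g} (hm : m ∈ n) (hxy : ⁅x, y⁆ = s + m) : ξ s = 0 := by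
  obtain ⟨φ, hφt, hφn⟩ := Submodule.exists_dual_extend_of_disjoint hdisj ξ
  rw [← apply_coe_add_eq hφt hφn s hm, ← hxy]
  exact hp.apply_lie_eq_zero_of_mem_rootSpace hn hstd hdecomp hφt hφn hx hy

lemma apply_eq_zero_of_lie_eq_of_finrank_lt [CharP F 2] [FiniteDimensional F g]
    (hp : IsTwoMap F p) (hn : ∀ x : g, x ∈ n ↔ x ∈ rootSpace t 0 ∧ IsTwoNilpotent p x)
    (hdecomp : rootSpace t 0 = t.toSubmodule ⊔ n) (hdisj : Disjoint t.toSubmodule n)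
    {ξ δ : Dual F t} (hdim : finrank F (rootSpace t (δ + ξ)) < finrank F (rootSpace t δ))
    {x y : g} (hx : x ∈ rootSpace t ξ) (hy : y ∈ rootSpace t ξ) {s : t} {m : g} (hm : m ∈ n)
    (hxy : ⁅x, y⁆ = s + m) : δ s = 0 := by
  obtain ⟨φ, hφt, hφn⟩ := Submodule.exists_dual_extend_of_disjoint hdisj δ
  have hφp : ∀ z ∈ rootSpace t ξ, φ (p z) = 0 := fun z hz ↦ by
    obtain ⟨sz, mz, hmz, hpz⟩ :=
      exists_eq_add_of_mem_rootSpace_zero hdecomp (hp.map_mem_rootSpace_zero hz)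
    rw [hpz, apply_coe_add_eq hφt hφn sz hmz]
    exact hp.apply_eq_zero_of_finrank_lt hdim hz ((hn mz).1 hmz).1 ((hn mz).1 hmz).2 hpz
  rw [← apply_coe_add_eq hφt hφn s hm, ← hxy]
  exact hp.apply_lie_eq_zero φ hφp hx hy

end IsTwoMap

section CaseB

variable {K V : Type*} [Field K] [AddCommGroup V] [Module K V]

lemma mem_span_add_of_add_add_apply_eq_zero [CharP K 2] {v₁ v₂ v₃ : V}
    (hspan : Submodule.span K {v₁, v₂, v₃} = ⊤) {f₁ f₂ f₃ : Dual K V}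
    (h₁ : f₁ v₁ = 1 ∧ f₁ v₂ = 0 ∧ f₁ v₃ = 0) (h₂ : f₂ v₁ = 0 ∧ f₂ v₂ = 1 ∧ f₂ v₃ = 0)
    (h₃ : f₃ v₁ = 0 ∧ f₃ v₂ = 0 ∧ f₃ v₃ = 1) {v : V} (hv : f₁ v + f₂ v + f₃ v = 0) :
    v ∈ Submodule.span K {v₁ + v₂, v₁ + v₃} := by
  have hexp : v = f₁ v • v₁ + f₂ v • v₂ + f₃ v • v₃ := by
    have := LinearMap.ext_on hspan (f := LinearMap.id)
      (g := f₁.smulRight v₁ + f₂.smulRight v₂ + f₃.smulRight v₃)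
      (by rintro _ (rfl | rfl | rfl) <;> simp [h₁, h₂, h₃])
    simpa using LinearMap.congr_fun this v
  have hf₃ : f₃ v = f₁ v + f₂ v := by
    linear_combination hv - (f₁ v + f₂ v) * CharTwo.two_eq_zero (R := K)
  have hv₂₃ : v₂ + v₃ = (v₁ + v₂) + (v₁ + v₃) := by
    rw [show (v₁ + v₂) + (v₁ + v₃) = v₂ + v₃ + (v₁ + v₁) by abel,
      add_self_eq_zero_of_charP_two K, add_zero]
  have hmem₁ : v₁ + v₂ ∈ Submodule.span K {v₁ + v₂, v₁ + v₃} := Submodule.subset_span (by simp)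
  have hmem₂ : v₁ + v₃ ∈ Submodule.span K {v₁ + v₂, v₁ + v₃} := Submodule.subset_span (by simp)
  rw [hexp, hf₃, show f₁ v • v₁ + f₂ v • v₂ + (f₁ v + f₂ v) • v₃ =
    f₁ v • (v₁ + v₃) + f₂ v • (v₂ + v₃) by module, hv₂₃]
  exact add_mem (Submodule.smul_mem _ _ hmem₂) (Submodule.smul_mem _ _ (add_mem hmem₁ hmem₂))

lemma add_add_apply_eq_zero {α β γ ξ : Dual K V}
    (hξ : ξ ∈ ({α, β, γ, α + β, α + γ, β + γ, α + β + γ} : Set (Dual K V))) {v : V}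
    (hξv : ξ v = 0) (hδ : ∀ δ ∈ ({α, β, γ} : Set (Dual K V)),
      δ + ξ ∈ ({α + β, α + γ, β + γ, α + β + γ} : Set (Dual K V)) → δ v = 0) :
    α v + β v + γ v = 0 := by
  simp only [Set.mem_insert_iff, Set.mem_singleton_iff] at hξ
  rcases hξ with rfl | rfl | rfl | rfl | rfl | rfl | rfl <;>
    try simp only [LinearMap.add_apply] at hξv
  · linear_combination hξv + hδ β (by simp) (by simp [add_comm]) +
      hδ γ (by simp) (by simp [add_comm])
  · linear_combination hξv + hδ α (by simp) (by simp) + hδ γ (by simp) (by simp [add_comm])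
  · linear_combination hξv + hδ α (by simp) (by simp) + hδ β (by simp) (by simp)
  · linear_combination hξv + hδ γ (by simp) (by simp [add_comm])
  · linear_combination hξv + hδ β (by simp) (by simp [add_comm, add_left_comm])
  · linear_combination hξv + hδ α (by simp) (by simp [add_assoc])
  · linear_combination hξv

end CaseB

theorem statement14_general
    {F : Type*} [Field F] [IsAlgClosed F] [CharP F 2]
    {g : Type*} [LieRing g] [LieAlgebra F g] [FiniteDimensional F g]
    (p : g → g) (hp : IsTwoMap F p)
    (t : LieSubalgebra F g)
    (n : Submodule F g)
    (hn : ∀ x : g, x ∈ n ↔ x ∈ rootSpace t 0 ∧ IsTwoNilpotent p x)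
    (hstd : ∀ x ∈ rootSpace t 0, ∀ y ∈ n, ⁅x, y⁆ ∈ n)
    (hdecomp : rootSpace t 0 = t.toSubmodule ⊔ n)
    (hdisj : Disjoint t.toSubmodule n)
    (t₁ t₂ t₃ : t)
    (htor1 : p (t₁ : g) = (t₁ : g)) (htor2 : p (t₂ : g) = (t₂ : g))
    (htor3 : p (t₃ : g) = (t₃ : g))
    (hspan : Submodule.span F ({t₁, t₂, t₃} : Set t) = ⊤)
    (α β γ : Module.Dual F t)
    (hα : α t₁ = 1 ∧ α t₂ = 0 ∧ α t₃ = 0)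
    (hβ : β t₁ = 0 ∧ β t₂ = 1 ∧ β t₃ = 0)
    (hγ : γ t₁ = 0 ∧ γ t₂ = 0 ∧ γ t₃ = 1)
    (hroots : rootSet t = ({α, β, γ, α + β, α + γ, β + γ, α + β + γ} :
      Set (Module.Dual F t)))
    (h1 : Module.finrank F (rootSpace t α) = Module.finrank F (rootSpace t β))
    (h2 : Module.finrank F (rootSpace t β) = Module.finrank F (rootSpace t γ))
    (h3 : ∀ ξ : Module.Dual F t,
      ξ = α + β ∨ ξ = α + γ ∨ ξ = β + γ ∨ ξ = α + β + γ →
      Module.finrank F (rootSpace t ξ) < Module.finrank F (rootSpace t γ)) :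
    ∀ x y : g,
      y ∈ Submodule.span F ({(t₁ : g) + (t₂ : g), (t₁ : g) + (t₃ : g)} : Set g) ⊔ n ⊔
          (⨆ ξ ∈ rootSet t, rootSpace t ξ) →
      ⁅x, y⁆ ∈ Submodule.span F ({(t₁ : g) + (t₂ : g), (t₁ : g) + (t₃ : g)} : Set g) ⊔ n ⊔
          (⨆ ξ ∈ rootSet t, rootSpace t ξ) := by
  have ht : t.toSubmodule ≤ rootSpace t 0 := hdecomp ▸ le_sup_left
  have hnt : n ≤ rootSpace t 0 := hdecomp ▸ le_sup_right
  have hS : Submodule.span F {(t₁ : g) + (t₂ : g), (t₁ : g) + (t₃ : g)} ≤ t.toSubmodule :=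
    Submodule.span_le.mpr (by simp [Set.insert_subset_iff, add_mem])
  have htop := iSup_rootSpace_eq_top hp ht hspan (by simp [htor1, htor2, htor3])
  refine lie_mem_sup_iSup_rootSpace hS hnt hstd htop fun ξ hξ x hx y hy ↦ ?_
  obtain ⟨s, m, hm, hxy⟩ :=
    exists_eq_add_of_mem_rootSpace_zero hdecomp (lie_mem_rootSpace_zero_of_charP_two hx hy)
  have hdim : ∀ δ ∈ ({α, β, γ} : Set (Module.Dual F t)),
      Module.finrank F (rootSpace t δ) = Module.finrank F (rootSpace t γ) := by
    rintro δ (rfl | rfl | rfl)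
    exacts [h1.trans h2, h2, rfl]
  have hsum : α s + β s + γ s = 0 :=
    add_add_apply_eq_zero (hroots ▸ hξ)
      (hp.apply_eq_zero_of_lie_eq hn hstd hdecomp hdisj hx hy hm hxy)
      fun δ hδ hδξ ↦ hp.apply_eq_zero_of_lie_eq_of_finrank_lt hn hdecomp hdisj
        ((hdim δ hδ).symm ▸ h3 _ (by simpa using hδξ)) hx hy hm hxy
  have hs := Submodule.mem_map_of_mem (f := t.toSubmodule.subtype)
    (mem_span_add_of_add_add_apply_eq_zero hspan hα hβ hγ hsum)
  rw [Submodule.map_span, Set.image_pair] at hs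
  rw [hxy]
  exact Submodule.add_mem_sup hs hm

/-- Case B with `dim g_α = dim g_β = dim g_γ > dim g_ξ` for each
`ξ ∈ {α+β, α+γ, β+γ, α+β+γ}`: `span{t1 + t2, t1 + t3} ⊕ n ⊕ ⊕_{ξ∈Δ} g_ξ`
is an ideal of `g`. -/
theorem statement14
    {F : Type*} [Field F] [IsAlgClosed F] [CharP F 2]
    {g : Type*} [LieRing g] [LieAlgebra F g] [FiniteDimensional F g]
    (p : g → g) (hp : IsTwoMap F p)
    (hcenter : LieAlgebra.center F g = ⊥)
    (t : LieSubalgebra F g) (hmax : IsMaxTorus F p t)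
    (n : Submodule F g)
    (hn : ∀ x : g, x ∈ n ↔ x ∈ rootSpace t 0 ∧ IsTwoNilpotent p x)
    (hstd : ∀ x ∈ rootSpace t 0, ∀ y ∈ n, ⁅x, y⁆ ∈ n)
    (hdecomp : rootSpace t 0 = t.toSubmodule ⊔ n)
    (hdisj : Disjoint t.toSubmodule n)
    (hrank : ∀ s : LieSubalgebra F g, IsTorus F p s → Module.finrank F s ≤ 3)
    (hdimt : Module.finrank F t = 3)
    (t₁ t₂ t₃ : t)
    (htor1 : p (t₁ : g) = (t₁ : g)) (htor2 : p (t₂ : g) = (t₂ : g))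
    (htor3 : p (t₃ : g) = (t₃ : g))
    (hspan : Submodule.span F ({t₁, t₂, t₃} : Set t) = ⊤)
    (α β γ : Module.Dual F t)
    (hα : α t₁ = 1 ∧ α t₂ = 0 ∧ α t₃ = 0)
    (hβ : β t₁ = 0 ∧ β t₂ = 1 ∧ β t₃ = 0)
    (hγ : γ t₁ = 0 ∧ γ t₂ = 0 ∧ γ t₃ = 1)
    (hroots : rootSet t = ({α, β, γ, α + β, α + γ, β + γ, α + β + γ} :
      Set (Module.Dual F t)))
    (h1 : Module.finrank F (rootSpace t α) = Module.finrank F (rootSpace t β))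
    (h2 : Module.finrank F (rootSpace t β) = Module.finrank F (rootSpace t γ))
    (h3 : ∀ ξ : Module.Dual F t,
      ξ = α + β ∨ ξ = α + γ ∨ ξ = β + γ ∨ ξ = α + β + γ →
      Module.finrank F (rootSpace t ξ) < Module.finrank F (rootSpace t γ)) :
    ∀ x y : g,
      y ∈ Submodule.span F ({(t₁ : g) + (t₂ : g), (t₁ : g) + (t₃ : g)} : Set g) ⊔ n ⊔
          (⨆ ξ ∈ rootSet t, rootSpace t ξ) →
      ⁅x, y⁆ ∈ Submodule.span F ({(t₁ : g) + (t₂ : g), (t₁ : g) + (t₃ : g)} : Set g) ⊔ n ⊔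
          (⨆ ξ ∈ rootSet t, rootSpace t ξ) :=
  statement14_general p hp t n hn hstd hdecomp hdisj t₁ t₂ t₃ htor1 htor2 htor3 hspan α β γ hα hβ hγ
    hroots h1 h2 h3
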